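/- arXiv:1301.1861 — 3 statements merged into one kernel-verified Lean document; each statement's English description precedes it below -/
import Mathlib

section
/- Let K be a compact group, K₁,…,Kₙ subgroups of K such that K = (K₁K₂⋯Kₙ)^N for some positive integer N (every element of K is a product of N blocks, each block a product of one element from each Kᵢ in order). Let (V,τ) be a finite-dimensional unitary representation of K with no nonzero K-invariant vector. Then for any x ∈ V and any vectors yᵢ ∈ V with yᵢ invariant under Kᵢ for each i, we have ‖x‖ ≤ 2nN · max_{1≤i≤n} ‖x − yᵢ‖. -/
/-!
Each `g ∈ Kᵢ` moves `x` by at most `2‖x - yᵢ‖`, since `τ g` is an isometry fixing `yᵢ`. The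
displacement `‖x - τ g x‖` is subadditive in `g`, so every `k = (k₁₁⋯k₁ₙ)⋯(k_N1⋯k_Nn)` moves `x`
by at most `2nN · maxᵢ ‖x - yᵢ‖`. Averaging `x - τ k x` over the Haar probability measure gives
`x - ∫ τ k x dk`, and `∫ τ k x dk` is an invariant vector, hence zero.
-/

open MeasureTheory

section Displacement

variable {G 𝕜 E : Type*} [Monoid G] [Semiring 𝕜] [SeminormedAddCommGroup E] [Module 𝕜 E]

theorem norm_sub_apply_le_two_mul_of_apply_eq (e : E ≃ₗᵢ[𝕜] E) {x y : E} (hy : e y = y) :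
    ‖x - e x‖ ≤ 2 * ‖x - y‖ :=
  calc ‖x - e x‖ ≤ ‖x - y‖ + ‖y - e x‖ := norm_sub_le_norm_sub_add_norm_sub x y (e x)
    _ = ‖x - y‖ + ‖x - y‖ := by rw [← hy, ← map_sub, LinearIsometryEquiv.norm_map, hy, norm_sub_rev]
    _ = 2 * ‖x - y‖ := by ring

theorem norm_sub_map_mul_apply_le (τ : G →* (E ≃ₗᵢ[𝕜] E)) (x : E) (g h : G) :
    ‖x - τ (g * h) x‖ ≤ ‖x - τ g x‖ + ‖x - τ h x‖ := by
  have hsplit : x - τ (g * h) x = (x - τ g x) + τ g (x - τ h x) := by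
    rw [map_sub, map_mul, LinearIsometryEquiv.coe_mul, Function.comp_apply]
    abel
  rw [hsplit, ← LinearIsometryEquiv.norm_map (τ g) (x - τ h x)]
  exact norm_add_le _ _

theorem norm_sub_map_list_prod_apply_le (τ : G →* (E ≃ₗᵢ[𝕜] E)) (x : E) {C : ℝ} (l : List G)
    (hl : ∀ g ∈ l, ‖x - τ g x‖ ≤ C) : ‖x - τ l.prod x‖ ≤ l.length * C := by
  induction l with
  | nil => simp
  | cons g l ih =>
    rw [List.prod_cons, List.length_cons, Nat.cast_succ]
    have hg := hl g List.mem_cons_self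
    have hl' := ih fun h hh => hl h (List.mem_cons_of_mem g hh)
    linarith [norm_sub_map_mul_apply_le τ x g l.prod]

end Displacement

section Averaging

variable {K 𝕜 E : Type*} [Group K] [TopologicalSpace K] [CompactSpace K] [MeasurableSpace K]
  [OpensMeasurableSpace K] [RCLike 𝕜] [NormedAddCommGroup E] [NormedSpace 𝕜 E] [NormedSpace ℝ E]
  [CompleteSpace E]

theorem map_integral_orbit_eq [MeasurableMul K] (μ : Measure K) [IsFiniteMeasure μ]
    [μ.IsMulLeftInvariant] (τ : K →* (E ≃ₗᵢ[𝕜] E)) {x : E} (hx : Continuous fun k => τ k x)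
    (g : K) : τ g (∫ k, τ k x ∂μ) = ∫ k, τ k x ∂μ := by
  have hint : Integrable (fun k => τ k x) μ :=
    hx.integrable_of_hasCompactSupport (.of_compactSpace _)
  calc τ g (∫ k, τ k x ∂μ)
      = ∫ k, τ g (τ k x) ∂μ :=
        ((τ g).toLinearIsometry.toContinuousLinearMap.integral_comp_comm hint).symm
    _ = ∫ k, τ (g * k) x ∂μ := by simp only [map_mul, LinearIsometryEquiv.coe_mul,
        Function.comp_apply]
    _ = ∫ k, τ k x ∂μ := integral_mul_left_eq_self (fun k => τ k x) g

theorem norm_le_of_forall_norm_sub_apply_le [MeasurableMul K] (μ : Measure K)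
    [IsProbabilityMeasure μ] [μ.IsMulLeftInvariant] (τ : K →* (E ≃ₗᵢ[𝕜] E))
    (hinv : ∀ v : E, (∀ k : K, τ k v = v) → v = 0) {x : E} (hx : Continuous fun k => τ k x)
    {C : ℝ} (hC : ∀ k, ‖x - τ k x‖ ≤ C) : ‖x‖ ≤ C := by
  have hint : Integrable (fun k => τ k x) μ :=
    hx.integrable_of_hasCompactSupport (.of_compactSpace _)
  have hfixed : ∫ k, τ k x ∂μ = 0 := hinv _ (map_integral_orbit_eq μ τ hx)
  have hx_eq : ∫ k, (x - τ k x) ∂μ = x := by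
    rw [integral_sub (integrable_const x) hint, integral_const, probReal_univ, one_smul, hfixed,
      sub_zero]
  simpa [hx_eq] using norm_integral_le_of_norm_le_const (μ := μ) (.of_forall hC)

end Averaging

theorem norm_le_of_generated_subgroups_general
    (K : Type*) [Group K] [TopologicalSpace K] [IsTopologicalGroup K] [CompactSpace K]
    (n N : ℕ) (hn : 0 < n) (K' : Fin n → Subgroup K)
    (hgen : ∀ k : K, ∃ f : Fin N → Fin n → K, (∀ b i, f b i ∈ K' i) ∧
      k = (List.ofFn fun b : Fin N => (List.ofFn fun i : Fin n => f b i).prod).prod)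
    (V : Type*) [NormedAddCommGroup V] [InnerProductSpace ℂ V] [FiniteDimensional ℂ V]
    (τ : K →* (V ≃ₗᵢ[ℂ] V))
    (hcont : ∀ x : V, Continuous fun k : K => τ k x)
    (hinv : ∀ v : V, (∀ k : K, τ k v = v) → v = 0)
    (x : V) (y : Fin n → V) (hy : ∀ i : Fin n, ∀ k ∈ K' i, τ k (y i) = y i) :
    ‖x‖ ≤ 2 * n * N *
      Finset.univ.sup' (Finset.univ_nonempty_iff.mpr (Fin.pos_iff_nonempty.mp hn))
        (fun i : Fin n => ‖x - y i‖) := by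
  set M := Finset.univ.sup' (Finset.univ_nonempty_iff.mpr (Fin.pos_iff_nonempty.mp hn))
    (fun i : Fin n => ‖x - y i‖)
  have hdisp : ∀ k, ‖x - τ k x‖ ≤ N * (n * (2 * M)) := by
    intro k
    obtain ⟨f, hf, rfl⟩ := hgen k
    refine (norm_sub_map_list_prod_apply_le τ x (C := n * (2 * M)) _ fun g hg => ?_).trans
      (by simp)
    obtain ⟨b, rfl⟩ := List.mem_ofFn.1 hg
    refine (norm_sub_map_list_prod_apply_le τ x (C := 2 * M) _ fun g hg => ?_).trans (by simp)
    obtain ⟨i, rfl⟩ := List.mem_ofFn.1 hg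
    calc ‖x - τ (f b i) x‖ ≤ 2 * ‖x - y i‖ :=
          norm_sub_apply_le_two_mul_of_apply_eq _ (hy i _ (hf b i))
      _ ≤ 2 * M := by gcongr; exact Finset.le_sup' (fun j => ‖x - y j‖) (Finset.mem_univ i)
  borelize K
  have : IsProbabilityMeasure (Measure.haarMeasure (⊤ : TopologicalSpace.PositiveCompacts K)) :=
    ⟨Measure.haarMeasure_self⟩
  calc ‖x‖ ≤ N * (n * (2 * M)) :=
        norm_le_of_forall_norm_sub_apply_le (Measure.haarMeasure ⊤) τ hinv (hcont x) hdisp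
    _ = 2 * n * N * M := by ring

/-- Lemma (Lafforgue-type averaging): if a compact group `K` is covered by `N`-fold products of
blocks `K₁K₂⋯Kₙ` and `(V,τ)` is a finite-dimensional unitary representation of `K` with no
nonzero invariant vector, then for any `x ∈ V` and vectors `yᵢ` invariant under `Kᵢ`,
`‖x‖ ≤ 2nN · max_i ‖x − yᵢ‖`. -/
theorem norm_le_of_generated_subgroups
    (K : Type*) [Group K] [TopologicalSpace K] [IsTopologicalGroup K] [CompactSpace K]
    (n N : ℕ) (hn : 0 < n) (hN : 0 < N) (K' : Fin n → Subgroup K)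
    (hgen : ∀ k : K, ∃ f : Fin N → Fin n → K, (∀ b i, f b i ∈ K' i) ∧
      k = (List.ofFn fun b : Fin N => (List.ofFn fun i : Fin n => f b i).prod).prod)
    (V : Type*) [NormedAddCommGroup V] [InnerProductSpace ℂ V] [FiniteDimensional ℂ V]
    (τ : K →* (V ≃ₗᵢ[ℂ] V))
    (hcont : ∀ x : V, Continuous fun k : K => τ k x)
    (hinv : ∀ v : V, (∀ k : K, τ k v = v) → v = 0)
    (x : V) (y : Fin n → V) (hy : ∀ i : Fin n, ∀ k ∈ K' i, τ k (y i) = y i) :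
    ‖x‖ ≤ 2 * n * N *
      Finset.univ.sup' (Finset.univ_nonempty_iff.mpr (Fin.pos_iff_nonempty.mp hn))
        (fun i : Fin n => ‖x - y i‖) :=
  norm_le_of_generated_subgroups_general K n N hn K' hgen V τ hcont hinv x y hy
end

section
/- Let 𝒪 be the ring of integers of a non-archimedean local field F. Let K₁ be the subgroup of Sp₄(𝒪) consisting of block matrices diag(A, Q·ᵀA⁻¹·Q) with A ∈ GL₂(𝒪) and Q the 2×2 antidiagonal permutation matrix, and K₂ the subgroup of matrices diag(1, B, 1) with B ∈ SL₂(𝒪) in the middle 2×2 block. Then Sp₄(𝒪) = (K₁K₂)^30, i.e., every element of Sp₄(𝒪) is a product of 30 factors each of the form k₁k₂ with k₁ ∈ K₁, k₂ ∈ K₂. -/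
/-- The antidiagonal symplectic form defining `Sp₄`. -/
def Jmat (R : Type*) [CommRing R] : Matrix (Fin 4) (Fin 4) R :=
  !![0,0,0,1; 0,0,1,0; 0,-1,0,0; -1,0,0,0]

/-- The 2×2 antidiagonal permutation matrix `Q`. -/
def Qmat (R : Type*) [CommRing R] : Matrix (Fin 2) (Fin 2) R :=
  !![0,1; 1,0]

/-- Membership in the subgroup `K₁ = {diag(A, QᵀA⁻¹Q) : A ∈ GL₂(𝒪)}` of `Sp₄(𝒪)`. -/
def memK1 {R : Type*} [CommRing R] (g : Matrix (Fin 4) (Fin 4) R) : Prop :=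
  ∃ A : Matrix (Fin 2) (Fin 2) R, IsUnit A.det ∧
    ∀ C : Matrix (Fin 2) (Fin 2) R, C = Qmat R * A⁻¹.transpose * Qmat R →
    g = !![A 0 0, A 0 1, 0, 0;
           A 1 0, A 1 1, 0, 0;
           0, 0, C 0 0, C 0 1;
           0, 0, C 1 0, C 1 1]

/-- Membership in the subgroup `K₂ = {diag(1, B, 1) : B ∈ SL₂(𝒪)}` of `Sp₄(𝒪)`. -/
def memK2 {R : Type*} [CommRing R] (g : Matrix (Fin 4) (Fin 4) R) : Prop :=
  ∃ B : Matrix (Fin 2) (Fin 2) R, B.det = 1 ∧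
    g = !![1, 0, 0, 0;
           0, B 0 0, B 0 1, 0;
           0, B 1 0, B 1 1, 0;
           0, 0, 0, 1]


/-!
Let `g ∈ Sp₄(𝒪)`. The `(0, 3)` entry of `gᵀJg = J` writes `1` as a combination of the first
column of `g`, so, `𝒪` being local, that column contains a unit. Signed permutations from `K₁`
and `K₂` move it to the top, and an element of `K₁` turns the top of the column into `(1, 0)`.
A matrix `[[1, 0], [X, 1]]` with `X 0 0 = X 1 1` (the opposite Siegel radical) clears the rest of
the column; then `g` fixes `e₀`, symplecticity forces its last row to be `e₃`, `K₂` clears the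
middle block, and what is left is an element of `K₁` times a Siegel-radical matrix
`[[1, X], [0, 1]]`. Each Siegel radical is a product of three root subgroups, each a
`K₁`-conjugate of a root subgroup of `K₂`, so its elements cost `7` factors. Altogether `20`
factors from `K₁ ∪ K₂ ⊆ K₁K₂` suffice.
-/

open Matrix
open scoped Pointwise MatrixGroups

namespace Set

variable {M : Type*} [Monoid M] {s : Set M} {a b g k k' : M} {m n : ℕ}

lemma mul_mem_pow (ha : a ∈ s ^ m) (hb : b ∈ s ^ n) : a * b ∈ s ^ (m + n) := by
  rw [pow_add]
  exact mul_mem_mul ha hb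

lemma mem_pow_of_mul_mem (hk' : k' ∈ s ^ m) (hk : k' * k = 1) (h : k * g ∈ s ^ n) :
    g ∈ s ^ (m + n) := by
  simpa [← mul_assoc, hk] using mul_mem_pow hk' h

end Set

namespace Sp4

variable {R : Type*} [CommRing R] {g : Matrix (Fin 4) (Fin 4) R}

def sp4 (R : Type*) [CommRing R] : Submonoid (Matrix (Fin 4) (Fin 4) R) where
  carrier := {g | gᵀ * Jmat R * g = Jmat R}
  one_mem' := by simp
  mul_mem' {g h} hg hh := by
    change (g * h)ᵀ * Jmat R * (g * h) = Jmat R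
    rw [transpose_mul, show hᵀ * gᵀ * Jmat R * (g * h) = hᵀ * (gᵀ * Jmat R * g) * h by
      simp only [Matrix.mul_assoc], hg, hh]

lemma Jmat_apply_of_mem_sp4 (hg : g ∈ sp4 R) (i j : Fin 4) :
    (gᵀ * Jmat R * g) i j = Jmat R i j :=
  congrFun (congrFun hg i) j

def K1K2 (R : Type*) [CommRing R] : Set (Matrix (Fin 4) (Fin 4) R) :=
  {g | memK1 g} * {g | memK2 g}

lemma Qmat_mul_self : Qmat R * Qmat R = 1 := by
  simp [Qmat, one_fin_two]

def fromDiagBlocks (A C : Matrix (Fin 2) (Fin 2) R) : Matrix (Fin 4) (Fin 4) R :=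
  !![A 0 0, A 0 1, 0, 0;
     A 1 0, A 1 1, 0, 0;
     0, 0, C 0 0, C 0 1;
     0, 0, C 1 0, C 1 1]

lemma fromDiagBlocks_one : fromDiagBlocks (1 : Matrix (Fin 2) (Fin 2) R) 1 = 1 := by
  ext i j; fin_cases i <;> fin_cases j <;> simp [fromDiagBlocks]

lemma fromDiagBlocks_mul (A C A' C' : Matrix (Fin 2) (Fin 2) R) :
    fromDiagBlocks A C * fromDiagBlocks A' C' = fromDiagBlocks (A * A') (C * C') := by
  ext i j; fin_cases i <;> fin_cases j <;>
    simp [fromDiagBlocks, mul_apply, Fin.sum_univ_four, Fin.sum_univ_two]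

lemma fromDiagBlocks_mem_sp4 {A C : Matrix (Fin 2) (Fin 2) R}
    (h : Aᵀ * Qmat R * C = Qmat R) : fromDiagBlocks A C ∈ sp4 R := by
  have h00 : A 1 0 * C 0 0 + A 0 0 * C 1 0 = 0 := by
    simpa [Qmat, mul_apply, Fin.sum_univ_two] using congrFun (congrFun h 0) 0
  have h01 : A 1 0 * C 0 1 + A 0 0 * C 1 1 = 1 := by
    simpa [Qmat, mul_apply, Fin.sum_univ_two] using congrFun (congrFun h 0) 1
  have h10 : A 1 1 * C 0 0 + A 0 1 * C 1 0 = 1 := by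
    simpa [Qmat, mul_apply, Fin.sum_univ_two] using congrFun (congrFun h 1) 0
  have h11 : A 1 1 * C 0 1 + A 0 1 * C 1 1 = 0 := by
    simpa [Qmat, mul_apply, Fin.sum_univ_two] using congrFun (congrFun h 1) 1
  show _ = _
  ext i j; fin_cases i <;> fin_cases j <;>
    simp [fromDiagBlocks, Jmat, mul_apply, Fin.sum_univ_four] <;>
    first
      | linear_combination h00 | linear_combination h01
      | linear_combination h10 | linear_combination h11
      | linear_combination -h00 | linear_combination -h01
      | linear_combination -h10 | linear_combination -h11

lemma mem_sp4_of_memK1 (hg : memK1 g) : g ∈ sp4 R := by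
  obtain ⟨A, hA, hg⟩ := hg
  rw [hg _ rfl]
  refine fromDiagBlocks_mem_sp4 ?_
  have hAA : Aᵀ * A⁻¹ᵀ = 1 := by rw [← transpose_mul, nonsing_inv_mul _ hA, transpose_one]
  calc Aᵀ * Qmat R * (Qmat R * A⁻¹ᵀ * Qmat R) = Aᵀ * (Qmat R * Qmat R) * A⁻¹ᵀ * Qmat R := by
        simp only [Matrix.mul_assoc]
    _ = Qmat R := by rw [Qmat_mul_self, Matrix.mul_one, hAA, Matrix.one_mul]

lemma mem_sp4_of_memK2 (hg : memK2 g) : g ∈ sp4 R := by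
  obtain ⟨B, hB, rfl⟩ := hg
  rw [det_fin_two] at hB
  show _ = _
  ext i j; fin_cases i <;> fin_cases j <;>
    simp [Jmat, mul_apply, Fin.sum_univ_four] <;>
    first | ring1 | linear_combination hB | linear_combination -hB

lemma mem_sp4_of_mem_pow {n : ℕ} (hg : g ∈ K1K2 R ^ n) : g ∈ sp4 R := by
  refine Submonoid.pow_subset ?_ hg
  rintro _ ⟨a, ha, b, hb, rfl⟩
  exact mul_mem (mem_sp4_of_memK1 ha) (mem_sp4_of_memK2 hb)

def toK1 (A : GL (Fin 2) R) : Matrix (Fin 4) (Fin 4) R :=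
  fromDiagBlocks A (Qmat R * (↑A⁻¹ : Matrix (Fin 2) (Fin 2) R)ᵀ * Qmat R)

lemma toK1_mul (A B : GL (Fin 2) R) : toK1 (A * B) = toK1 A * toK1 B := by
  simp only [toK1, _root_.mul_inv_rev, Units.val_mul, transpose_mul, fromDiagBlocks_mul,
    Matrix.mul_assoc]
  simp only [← Matrix.mul_assoc (Qmat R) (Qmat R), Qmat_mul_self, Matrix.one_mul]

lemma toK1_one : toK1 (1 : GL (Fin 2) R) = 1 := by
  simp [toK1, Qmat_mul_self, fromDiagBlocks_one]

lemma toK1_mul_inv (A : GL (Fin 2) R) : toK1 A * toK1 A⁻¹ = 1 := by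
  rw [← toK1_mul, mul_inv_cancel, toK1_one]

def toK2 (B : SL(2, R)) : Matrix (Fin 4) (Fin 4) R :=
  !![1, 0, 0, 0;
     0, B 0 0, B 0 1, 0;
     0, B 1 0, B 1 1, 0;
     0, 0, 0, 1]

lemma toK2_mul_inv (B : SL(2, R)) : toK2 B * toK2 B⁻¹ = 1 := by
  have hB := B.det_coe
  rw [det_fin_two] at hB
  ext i j; fin_cases i <;> fin_cases j <;>
    simp [toK2, adjugate_fin_two, mul_apply, Fin.sum_univ_four] <;>
    first | ring1 | linear_combination hB

lemma toK2_inv_mul (B : SL(2, R)) : toK2 B⁻¹ * toK2 B = 1 := by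
  simpa using toK2_mul_inv B⁻¹

lemma memK1_toK1 (A : GL (Fin 2) R) : memK1 (toK1 A) :=
  ⟨A, A.isUnit.map detMonoidHom, fun C hC => by rw [hC, toK1, GeneralLinearGroup.coe_inv]; rfl⟩

lemma memK1_one : memK1 (1 : Matrix (Fin 4) (Fin 4) R) := by
  simpa [toK1_one] using memK1_toK1 (1 : GL (Fin 2) R)

lemma memK2_toK2 (B : SL(2, R)) : memK2 (toK2 B) :=
  ⟨B, B.det_coe, rfl⟩

lemma memK2_one : memK2 (1 : Matrix (Fin 4) (Fin 4) R) :=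
  ⟨1, det_one, by ext i j; fin_cases i <;> fin_cases j <;> simp⟩

lemma one_mem_K1K2 : (1 : Matrix (Fin 4) (Fin 4) R) ∈ K1K2 R :=
  ⟨1, memK1_one, 1, memK2_one, mul_one 1⟩

lemma toK1_mem_pow_one (A : GL (Fin 2) R) : toK1 A ∈ K1K2 R ^ 1 := by
  rw [pow_one]
  exact ⟨_, memK1_toK1 A, 1, memK2_one, mul_one _⟩

lemma toK2_mem_pow_one (B : SL(2, R)) : toK2 B ∈ K1K2 R ^ 1 := by
  rw [pow_one]
  exact ⟨1, memK1_one, _, memK2_toK2 B, one_mul _⟩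

lemma toK1_conj_mem_pow_three (A : GL (Fin 2) R) (B : SL(2, R)) :
    toK1 A * toK2 B * toK1 A⁻¹ ∈ K1K2 R ^ 3 :=
  Set.mul_mem_pow (Set.mul_mem_pow (toK1_mem_pow_one A) (toK2_mem_pow_one B)) (toK1_mem_pow_one _)

def swapGL : GL (Fin 2) R := ⟨Qmat R, Qmat R, Qmat_mul_self, Qmat_mul_self⟩

/-- Conjugation by `toK1 onesGL` carries `toK2` of the upper unitriangular matrices onto `upper`
of the constant matrices, and conjugation by `toK1 onesGL⁻¹` does the same for `lower`. -/
def onesGL : GL (Fin 2) R :=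
  ⟨!![0, 1; 1, 1], !![-1, 1; 1, 0], by simp [one_fin_two], by simp [one_fin_two]⟩

def sl2Upper (r : R) : SL(2, R) := ⟨!![1, r; 0, 1], by simp⟩

def sl2Lower (r : R) : SL(2, R) := ⟨!![1, 0; r, 1], by simp⟩

def upper (X : Matrix (Fin 2) (Fin 2) R) : Matrix (Fin 4) (Fin 4) R :=
  !![1, 0, X 0 0, X 0 1;
     0, 1, X 1 0, X 1 1;
     0, 0, 1, 0;
     0, 0, 0, 1]

def lower (X : Matrix (Fin 2) (Fin 2) R) : Matrix (Fin 4) (Fin 4) R :=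
  !![1, 0, 0, 0;
     0, 1, 0, 0;
     X 0 0, X 0 1, 1, 0;
     X 1 0, X 1 1, 0, 1]

lemma upper_add (X Y : Matrix (Fin 2) (Fin 2) R) : upper (X + Y) = upper X * upper Y := by
  ext i j; fin_cases i <;> fin_cases j <;>
    simp [upper, mul_apply, Fin.sum_univ_four, add_comm]

lemma lower_add (X Y : Matrix (Fin 2) (Fin 2) R) : lower (X + Y) = lower X * lower Y := by
  ext i j; fin_cases i <;> fin_cases j <;>
    simp [lower, mul_apply, Fin.sum_univ_four]

lemma lower_zero : lower (0 : Matrix (Fin 2) (Fin 2) R) = 1 := by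
  ext i j; fin_cases i <;> fin_cases j <;> simp [lower]

lemma upper_mem_pow {X : Matrix (Fin 2) (Fin 2) R} (hX : X 0 0 = X 1 1) :
    upper X ∈ K1K2 R ^ 7 := by
  have hsplit : upper X = upper !![X 0 0, X 0 0; X 0 0, X 0 0] *
      upper !![0, X 0 1 - X 0 0; 0, 0] * upper !![0, 0; X 1 0 - X 0 0, 0] := by
    rw [← upper_add, ← upper_add]
    congr 1
    ext i j; fin_cases i <;> fin_cases j <;> simp [hX]
  have hconst : upper !![X 0 0, X 0 0; X 0 0, X 0 0] =
      toK1 onesGL * toK2 (sl2Upper (X 0 0)) * toK1 onesGL⁻¹ := by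
    ext i j; fin_cases i <;> fin_cases j <;>
      simp [upper, toK1, toK2, fromDiagBlocks, onesGL, sl2Upper, Qmat, mul_apply,
        Fin.sum_univ_four, Fin.sum_univ_two, vecMul, dotProduct]
  have hcorner : upper !![0, X 0 1 - X 0 0; 0, 0] =
      toK1 swapGL * toK2 (sl2Upper (X 0 1 - X 0 0)) * toK1 swapGL⁻¹ := by
    ext i j; fin_cases i <;> fin_cases j <;>
      simp [upper, toK1, toK2, fromDiagBlocks, swapGL, sl2Upper, Qmat, mul_apply,
        Fin.sum_univ_four, Fin.sum_univ_two, vecMul, dotProduct]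
  have hmiddle : upper !![0, 0; X 1 0 - X 0 0, 0] = toK2 (sl2Upper (X 1 0 - X 0 0)) := by
    ext i j; fin_cases i <;> fin_cases j <;> simp [upper, toK2, sl2Upper]
  rw [hsplit, hconst, hcorner, hmiddle]
  exact Set.mul_mem_pow
    (Set.mul_mem_pow (toK1_conj_mem_pow_three _ _) (toK1_conj_mem_pow_three _ _))
    (toK2_mem_pow_one _)

lemma lower_mem_pow {X : Matrix (Fin 2) (Fin 2) R} (hX : X 0 0 = X 1 1) :
    lower X ∈ K1K2 R ^ 7 := by
  have hsplit : lower X = lower !![X 0 0, X 0 0; X 0 0, X 0 0] *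
      lower !![0, 0; X 1 0 - X 0 0, 0] * lower !![0, X 0 1 - X 0 0; 0, 0] := by
    rw [← lower_add, ← lower_add]
    congr 1
    ext i j; fin_cases i <;> fin_cases j <;> simp [hX]
  have hconst : lower !![X 0 0, X 0 0; X 0 0, X 0 0] =
      toK1 onesGL⁻¹ * toK2 (sl2Lower (X 0 0)) * toK1 onesGL⁻¹⁻¹ := by
    ext i j; fin_cases i <;> fin_cases j <;>
      simp [lower, toK1, toK2, fromDiagBlocks, onesGL, sl2Lower, Qmat, mul_apply,
        Fin.sum_univ_four, Fin.sum_univ_two, vecMul, dotProduct]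
  have hcorner : lower !![0, 0; X 1 0 - X 0 0, 0] =
      toK1 swapGL * toK2 (sl2Lower (X 1 0 - X 0 0)) * toK1 swapGL⁻¹ := by
    ext i j; fin_cases i <;> fin_cases j <;>
      simp [lower, toK1, toK2, fromDiagBlocks, swapGL, sl2Lower, Qmat, mul_apply,
        Fin.sum_univ_four, Fin.sum_univ_two, vecMul, dotProduct]
  have hmiddle : lower !![0, X 0 1 - X 0 0; 0, 0] = toK2 (sl2Lower (X 0 1 - X 0 0)) := by
    ext i j; fin_cases i <;> fin_cases j <;> simp [lower, toK2, sl2Lower]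
  rw [hsplit, hconst, hcorner, hmiddle]
  exact Set.mul_mem_pow
    (Set.mul_mem_pow (toK1_conj_mem_pow_three _ _) (toK1_conj_mem_pow_three _ _))
    (toK2_mem_pow_one _)

lemma mem_pow_of_unipotent {a b c d e : R}
    (h : !![1, a, b, c; 0, 1, 0, d; 0, 0, 1, e; 0, 0, 0, 1] ∈ sp4 R) :
    !![1, a, b, c; 0, 1, 0, d; 0, 0, 1, e; 0, 0, 0, 1] ∈ K1K2 R ^ 8 := by
  have h13 : e + a = 0 := by
    simpa [Jmat, mul_apply, Fin.sum_univ_four] using Jmat_apply_of_mem_sp4 h 1 3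
  have h23 : -d + b = 0 := by
    simpa [Jmat, mul_apply, Fin.sum_univ_four] using Jmat_apply_of_mem_sp4 h 2 3
  obtain rfl : e = -a := by linear_combination h13
  obtain rfl : b = d := by linear_combination h23
  have hfactor : !![1, a, b, c; 0, 1, 0, b; 0, 0, 1, -a; 0, 0, 0, 1] =
      toK1 (GeneralLinearGroup.upperRightHom a) * upper !![b, c - a * b; 0, b] := by
    ext i j; fin_cases i <;> fin_cases j <;>
      simp [toK1, fromDiagBlocks, upper, Qmat, mul_apply, Fin.sum_univ_four, Fin.sum_univ_two,
        vecMul, dotProduct]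
  rw [hfactor]
  exact Set.mul_mem_pow (toK1_mem_pow_one _) (upper_mem_pow rfl)

lemma mem_pow_of_col_zero_eq_single (hg : g ∈ sp4 R)
    (h0 : g 0 0 = 1) (h1 : g 1 0 = 0) (h2 : g 2 0 = 0) (h3 : g 3 0 = 0) :
    g ∈ K1K2 R ^ 9 := by
  have h31 : g 3 1 = 0 := by
    simpa [Jmat, mul_apply, Fin.sum_univ_four, h0, h1, h2, h3] using Jmat_apply_of_mem_sp4 hg 1 0
  have h32 : g 3 2 = 0 := by
    simpa [Jmat, mul_apply, Fin.sum_univ_four, h0, h1, h2, h3] using Jmat_apply_of_mem_sp4 hg 2 0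
  have h33 : g 3 3 = 1 := by
    simpa [Jmat, mul_apply, Fin.sum_univ_four, h0, h1, h2, h3] using Jmat_apply_of_mem_sp4 hg 3 0
  have hdet : -(g 2 1 * g 1 2) + g 1 1 * g 2 2 = 1 := by
    simpa [Jmat, mul_apply, Fin.sum_univ_four, h0, h1, h2, h3, h31, h32] using
      Jmat_apply_of_mem_sp4 hg 1 2
  obtain ⟨B, hB⟩ : ∃ B : SL(2, R), (B : Matrix (Fin 2) (Fin 2) R) =
      !![g 1 1, g 1 2; g 2 1, g 2 2] :=
    ⟨⟨_, by rw [det_fin_two_of]; linear_combination hdet⟩, rfl⟩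
  have hBinv : ((B⁻¹ : SL(2, R)) : Matrix (Fin 2) (Fin 2) R) =
      !![g 2 2, -g 1 2; -g 2 1, g 1 1] := by
    rw [Matrix.SpecialLinearGroup.coe_inv, hB, adjugate_fin_two_of]
  have hreduce : toK2 B⁻¹ * g = !![1, g 0 1, g 0 2, g 0 3;
      0, 1, 0, g 2 2 * g 1 3 - g 1 2 * g 2 3;
      0, 0, 1, g 1 1 * g 2 3 - g 2 1 * g 1 3;
      0, 0, 0, 1] := by
    ext i j; fin_cases i <;> fin_cases j <;>
      simp [toK2, hBinv, mul_apply, Fin.sum_univ_four, h0, h1, h2, h3, h31, h32, h33] <;>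
      first | ring1 | linear_combination hdet
  show g ∈ K1K2 R ^ (1 + 8)
  refine Set.mem_pow_of_mul_mem (toK2_mem_pow_one B) (toK2_mul_inv B) ?_
  rw [hreduce]
  exact mem_pow_of_unipotent (hreduce ▸ mul_mem (mem_sp4_of_mem_pow (toK2_mem_pow_one B⁻¹)) hg)

lemma mem_pow_of_col_zero_head_eq_single (hg : g ∈ sp4 R) (h0 : g 0 0 = 1) (h1 : g 1 0 = 0) :
    g ∈ K1K2 R ^ 16 := by
  set X : Matrix (Fin 2) (Fin 2) R := !![-g 2 0, 0; -g 3 0, -g 2 0]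
  have hX : lower X ∈ K1K2 R ^ 7 := lower_mem_pow (by simp [X])
  show g ∈ K1K2 R ^ (7 + 9)
  refine Set.mem_pow_of_mul_mem (lower_mem_pow (X := -X) (by simp [X]))
    (by rw [← lower_add, neg_add_cancel, lower_zero]) ?_
  refine mem_pow_of_col_zero_eq_single (mul_mem (mem_sp4_of_mem_pow hX) hg) ?_ ?_ ?_ ?_ <;>
    simp [X, lower, mul_apply, Fin.sum_univ_four, h0, h1]

lemma mem_pow_of_isUnit_zero (hg : g ∈ sp4 R) (hu : IsUnit (g 0 0)) : g ∈ K1K2 R ^ 17 := by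
  obtain ⟨u, hu⟩ := hu
  let A : GL (Fin 2) R := ⟨!![(u : R), 0; g 1 0, 1], !![↑u⁻¹, 0; -(g 1 0 * ↑u⁻¹), 1],
    by simp [one_fin_two], by simp [one_fin_two]⟩
  show g ∈ K1K2 R ^ (1 + 16)
  refine Set.mem_pow_of_mul_mem (toK1_mem_pow_one A) (toK1_mul_inv A) ?_
  refine mem_pow_of_col_zero_head_eq_single
    (mul_mem (mem_sp4_of_mem_pow (toK1_mem_pow_one _)) hg) ?_ ?_ <;>
    simp [A, toK1, fromDiagBlocks, mul_apply, Fin.sum_univ_four, ← hu]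

lemma mem_pow_of_isUnit_one (hg : g ∈ sp4 R) (hu : IsUnit (g 1 0)) : g ∈ K1K2 R ^ 18 := by
  show g ∈ K1K2 R ^ (1 + 17)
  refine Set.mem_pow_of_mul_mem (toK1_mem_pow_one swapGL) (toK1_mul_inv swapGL) ?_
  refine mem_pow_of_isUnit_zero (mul_mem (mem_sp4_of_mem_pow (toK1_mem_pow_one _)) hg) ?_
  simpa [toK1, swapGL, fromDiagBlocks, Qmat, mul_apply, Fin.sum_univ_four] using hu

lemma mem_pow_of_isUnit_two (hg : g ∈ sp4 R) (hu : IsUnit (g 2 0)) : g ∈ K1K2 R ^ 19 := by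
  let w : SL(2, R) := ⟨!![0, 1; -1, 0], by simp⟩
  show g ∈ K1K2 R ^ (1 + 18)
  refine Set.mem_pow_of_mul_mem (toK2_mem_pow_one w⁻¹) (toK2_inv_mul w) ?_
  refine mem_pow_of_isUnit_one (mul_mem (mem_sp4_of_mem_pow (toK2_mem_pow_one _)) hg) ?_
  simpa [w, toK2, mul_apply, Fin.sum_univ_four] using hu

lemma mem_pow_of_isUnit_three (hg : g ∈ sp4 R) (hu : IsUnit (g 3 0)) : g ∈ K1K2 R ^ 20 := by
  show g ∈ K1K2 R ^ (1 + 19)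
  refine Set.mem_pow_of_mul_mem (toK1_mem_pow_one swapGL) (toK1_mul_inv swapGL) ?_
  refine mem_pow_of_isUnit_two (mul_mem (mem_sp4_of_mem_pow (toK1_mem_pow_one _)) hg) ?_
  simpa [toK1, swapGL, fromDiagBlocks, Qmat, mul_apply, Fin.sum_univ_four, Fin.sum_univ_two,
    vecMul, dotProduct] using hu

lemma exists_isUnit_apply_zero [IsLocalRing R] (hg : g ∈ sp4 R) : ∃ i, IsUnit (g i 0) := by
  by_contra! h
  have h03 : -(g 3 0 * g 0 3) + -(g 2 0 * g 1 3) + g 1 0 * g 2 3 + g 0 0 * g 3 3 = 1 := by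
    simpa [Jmat, mul_apply, Fin.sum_univ_four] using Jmat_apply_of_mem_sp4 hg 0 3
  have hm (i : Fin 4) (x : R) : g i 0 * x ∈ IsLocalRing.maximalIdeal R :=
    Ideal.mul_mem_right _ _ (h i)
  have hone : (1 : R) ∈ IsLocalRing.maximalIdeal R := by
    rw [← h03]
    exact add_mem (add_mem (add_mem (neg_mem (hm 3 _)) (neg_mem (hm 2 _))) (hm 1 _)) (hm 0 _)
  exact (IsLocalRing.maximalIdeal.isMaximal R).ne_top ((Ideal.eq_top_iff_one _).mpr hone)

lemma mem_K1K2_pow_twenty [IsLocalRing R] (hg : g ∈ sp4 R) : g ∈ K1K2 R ^ 20 := by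
  have hmono {n : ℕ} (hn : n ≤ 20) : K1K2 R ^ n ⊆ K1K2 R ^ 20 :=
    Set.pow_subset_pow_right one_mem_K1K2 hn
  obtain ⟨i, hi⟩ := exists_isUnit_apply_zero hg
  fin_cases i
  · exact hmono (by norm_num) (mem_pow_of_isUnit_zero hg hi)
  · exact hmono (by norm_num) (mem_pow_of_isUnit_one hg hi)
  · exact hmono (by norm_num) (mem_pow_of_isUnit_two hg hi)
  · exact mem_pow_of_isUnit_three hg hi

end Sp4

theorem sp4_eq_K1K2_pow_thirty_general
    (𝒪 : Type*) [CommRing 𝒪] [IsLocalRing 𝒪]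
    (g : Matrix (Fin 4) (Fin 4) 𝒪)
    (hg : g.transpose * Jmat 𝒪 * g = Jmat 𝒪) :
    ∃ k₁ k₂ : Fin 30 → Matrix (Fin 4) (Fin 4) 𝒪,
      (∀ i, memK1 (k₁ i)) ∧ (∀ i, memK2 (k₂ i)) ∧
      g = (List.ofFn fun i : Fin 30 => k₁ i * k₂ i).prod := by
  have h30 : g ∈ Sp4.K1K2 𝒪 ^ 30 :=
    Set.pow_subset_pow_right Sp4.one_mem_K1K2 (by norm_num) (Sp4.mem_K1K2_pow_twenty hg)
  obtain ⟨f, rfl⟩ := Set.mem_pow.mp h30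
  choose k₁ hk₁ k₂ hk₂ hk using fun i => (f i).2
  exact ⟨k₁, k₂, hk₁, hk₂, by simp only [hk]⟩

/-- For `𝒪` the ring of integers of a non-archimedean local field (a complete discrete
valuation ring with finite residue field), `Sp₄(𝒪) = (K₁K₂)^30`: every element of `Sp₄(𝒪)` is
a product of 30 factors, each of the form `k₁k₂` with `k₁ ∈ K₁` and `k₂ ∈ K₂`. -/
theorem sp4_eq_K1K2_pow_thirty
    (𝒪 : Type*) [CommRing 𝒪] [IsDomain 𝒪] [IsLocalRing 𝒪] [IsDiscreteValuationRing 𝒪]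
    [Finite (IsLocalRing.ResidueField 𝒪)]
    [IsAdicComplete (IsLocalRing.maximalIdeal 𝒪) 𝒪]
    (g : Matrix (Fin 4) (Fin 4) 𝒪)
    (hg : g.transpose * Jmat 𝒪 * g = Jmat 𝒪) :
    ∃ k₁ k₂ : Fin 30 → Matrix (Fin 4) (Fin 4) 𝒪,
      (∀ i, memK1 (k₁ i)) ∧ (∀ i, memK2 (k₂ i)) ∧
      g = (List.ofFn fun i : Fin 30 => k₁ i * k₂ i).prod :=
  sp4_eq_K1K2_pow_thirty_general 𝒪 g hg
end

section
/- Let F be a non-archimedean local field. For integers i ≥ j ≥ 0 and elements a, b, x, y ∈ 𝒪 define in Sp₄(F): β(a,b)⁻¹ = diag(π^i,1,1,π^{−i}) · U(a,b) where U(a,b) is the matrix with 1's on the diagonal, entry (2,1) = 1+πa, entry (4,1) = −πb, entry (4,3) = −(1+πa); and α(x,y) = V(x,y) · diag(π^{−j},1,1,π^j) where V(x,y) has 1's on the diagonal and entries (3,1) = x, (4,1) = πy + x, (4,2) = x. Then the 2×2 minor of β(a,b)⁻¹α(x,y) on rows {2,4} and columns {1,3} has absolute value q^{i+j}, i.e.,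 ‖Λ²(β(a,b)⁻¹α(x,y))‖ ≥ q^{i+j}. -/
/-!
Writing `β(a,b)⁻¹ α(x,y) = D · (U V) · E` with `D`, `E` diagonal, a 2×2 minor of the product is
the same minor of the unipotent part `U V` scaled by the four relevant diagonal entries, here
`π^{-i} · π^{-j}`. The rows-{2,4}, columns-{1,3} minor of `U V` is `-(1 + πa)²`, a unit because
`|πa| < 1` and the absolute value is nonarchimedean; hence the minor has absolute value
`q^{i+j}`.
-/

namespace Matrix

variable {m n R : Type*} [CommRing R]

def minor₂ (M : Matrix m n R) (r r' : m) (c c' : n) : R :=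
  M r c * M r' c' - M r c' * M r' c

theorem minor₂_diagonal_mul_mul_diagonal [Fintype m] [DecidableEq m] [Fintype n] [DecidableEq n]
    (d : m → R) (M : Matrix m n R) (e : n → R) (r r' : m) (c c' : n) :
    minor₂ (diagonal d * M * diagonal e) r r' c c' =
      d r * d r' * (e c * e c') * minor₂ M r r' c c' := by
  simp only [minor₂, diagonal_mul, mul_diagonal]
  ring

end Matrix

theorem IsNonarchimedean.apply_one_add_mul_eq_one {R : Type*} [Ring R] [Nontrivial R]
    [NoZeroDivisors R] {v : AbsoluteValue R ℝ} (hv : IsNonarchimedean v) {π a : R}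
    (hπ : v π < 1) (ha : v a ≤ 1) : v (1 + π * a) = 1 := by
  have hπa : v (π * a) < v 1 := by
    rw [map_mul, map_one]
    exact mul_lt_one_of_nonneg_of_lt_one_left (v.nonneg π) hπ ha
  rw [hv.add_eq_left_of_lt hπa, map_one]

open Matrix in
theorem minor_rows24_cols13_abs_eq_general
    (F : Type*) [Field F] (v : AbsoluteValue F ℝ) (hv : IsNonarchimedean v)
    (π : F) (q : ℝ) (hq : 1 < q) (hπ : v π = q⁻¹)
    (i j : ℤ)
    (a b x y : F) (ha : v a ≤ 1)
    (βinv α g : Matrix (Fin 4) (Fin 4) F)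
    (hβ : βinv = Matrix.diagonal ![π ^ i, 1, 1, π ^ (-i)] *
      !![1, 0, 0, 0;
         1 + π*a, 1, 0, 0;
         0, 0, 1, 0;
         -(π*b), 0, -(1 + π*a), 1])
    (hα : α = !![1, 0, 0, 0;
                 0, 1, 0, 0;
                 x, 0, 1, 0;
                 π*y + x, x, 0, 1] *
      Matrix.diagonal ![π ^ (-j), 1, 1, π ^ j])
    (hg : g = βinv * α) :
    v (g 1 0 * g 3 2 - g 1 2 * g 3 0) = q ^ (i + j) := by
  have hunit : v (1 + π * a) = 1 :=
    hv.apply_one_add_mul_eq_one (hπ ▸ inv_lt_one_of_one_lt₀ hq) ha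
  have hUV : minor₂ (!![1, 0, 0, 0; 1 + π*a, 1, 0, 0; 0, 0, 1, 0; -(π*b), 0, -(1 + π*a), 1] *
      !![1, 0, 0, 0; 0, 1, 0, 0; x, 0, 1, 0; π*y + x, x, 0, 1]) 1 3 0 2 = -(1 + π * a) ^ 2 := by
    simp only [minor₂, mul_apply, Fin.sum_univ_four, of_apply, cons_val', cons_val_fin_one,
      cons_val_one, cons_val_zero, cons_val, mul_one, mul_zero, add_zero, zero_mul, zero_add,
      one_mul, sub_zero]
    ring
  change v (minor₂ g 1 3 0 2) = _
  rw [hg, hβ, hα, ← Matrix.mul_assoc, Matrix.mul_assoc (diagonal _),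
    minor₂_diagonal_mul_mul_diagonal, hUV]
  simp only [_root_.zpow_neg, cons_val_one, cons_val_zero, cons_val, one_mul, mul_one, mul_neg,
    map_neg_eq_map, AbsoluteValue.map_mul, map_inv₀, map_zpow₀, hπ, _root_.inv_zpow', inv_inv,
    AbsoluteValue.map_pow, hunit, one_pow]
  exact (zpow_add₀ (zero_lt_one.trans hq).ne' i j).symm

/-- The key minor computation in the local estimate for the move `(i,j) ↦ (i+1, j−1)`: with
`β(a,b)⁻¹ = diag(π^i,1,1,π^{−i})·U(a,b)` and `α(x,y) = V(x,y)·diag(π^{−j},1,1,π^j)` as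
indicated (entries `a, b, x, y ∈ 𝒪`), the 2×2 minor of `β(a,b)⁻¹α(x,y)` on rows {2,4} and
columns {1,3} has absolute value `q^{i+j}`; in particular `‖Λ²(β(a,b)⁻¹α(x,y))‖ ≥ q^{i+j}`. -/
theorem minor_rows24_cols13_abs_eq
    (F : Type*) [Field F] (v : AbsoluteValue F ℝ) (hv : IsNonarchimedean v)
    (π : F) (q : ℝ) (hq : 1 < q) (hπ : v π = q⁻¹)
    (i j : ℤ) (hj : 0 ≤ j) (hij : j ≤ i)
    (a b x y : F) (ha : v a ≤ 1) (hb : v b ≤ 1) (hx : v x ≤ 1) (hy : v y ≤ 1)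
    (βinv α g : Matrix (Fin 4) (Fin 4) F)
    (hβ : βinv = Matrix.diagonal ![π ^ i, 1, 1, π ^ (-i)] *
      !![1, 0, 0, 0;
         1 + π*a, 1, 0, 0;
         0, 0, 1, 0;
         -(π*b), 0, -(1 + π*a), 1])
    (hα : α = !![1, 0, 0, 0;
                 0, 1, 0, 0;
                 x, 0, 1, 0;
                 π*y + x, x, 0, 1] *
      Matrix.diagonal ![π ^ (-j), 1, 1, π ^ j])
    (hg : g = βinv * α) :
    v (g 1 0 * g 3 2 - g 1 2 * g 3 0) = q ^ (i + j) :=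
  minor_rows24_cols13_abs_eq_general F v hv π q hq hπ i j a b x y ha βinv α g hβ hα hg
end
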